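/- arXiv:2006.12741 — 2 statements merged into one kernel-verified Lean document; each statement's English description precedes it below -/
import Mathlib

section
/- For every natural number n with n ≥ 1, there exists a connected highly irregular simple graph on n vertices if and only if n ∉ {3, 5, 7}. Here a connected graph is highly irregular if for every vertex v, the degrees of the neighbours of v are pairwise distinct. -/
/-!
Let `Δ` be the maximum degree of a highly irregular graph and `v` a vertex of degree `Δ`. The `Δ`
neighbours of `v` have distinct degrees in `1, …, Δ`, so one of them, `u`, has degree `Δ`; having
equal degrees, `u` and `v` have no common neighbour, whence `n ≥ 2Δ`. A neighbour of `u` or `v`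
adjacent to some `w ∉ N(u) ∪ N(v)` has degree strictly between `1` and `Δ`. In a connected graph
with `n > 2Δ` such an edge exists, so `Δ ≥ 3`. If `n = 2Δ + 1`, all neighbours of the one vertex
`w ∉ N(u) ∪ N(v)` are of this kind, so `0 < deg w ≤ Δ - 2`, while by the handshake lemma
`deg w ≡ Δ(Δ + 1) ≡ 0 (mod 2)`; hence `Δ ≥ 4`. Together these rule out `n = 3, 5, 7`.
Conversely, the half graph on `2k` vertices is highly irregular, and subdividing its edge between
the vertices of degree `k` and `2` keeps it so when `k ≥ 4`.
-/

/-- A connected simple graph is highly irregular if the neighbours of each vertex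
have pairwise distinct degrees. -/
def SimpleGraph.HighlyIrregular {V : Type*} (G : SimpleGraph V) : Prop :=
  ∀ v u w : V, G.Adj v u → G.Adj v w → u ≠ w →
    Nat.card (G.neighborSet u) ≠ Nat.card (G.neighborSet w)

open Finset

namespace SimpleGraph

variable {V : Type*} [Fintype V] {G : SimpleGraph V} [DecidableRel G.Adj]

theorem highlyIrregular_iff_degree :
    G.HighlyIrregular ↔
      ∀ v u w, G.Adj v u → G.Adj v w → G.degree u = G.degree w → u = w := by
  simp only [HighlyIrregular, Nat.card_eq_fintype_card, card_neighborSet_eq_degree]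
  exact forall₃_congr fun _ _ _ ↦ forall₂_congr fun _ _ ↦ not_imp_not

theorem one_lt_degree_of_adj {x v w : V} (hv : G.Adj x v) (hw : G.Adj x w) (hne : v ≠ w) :
    1 < G.degree x := by
  rw [← card_neighborFinset_eq_degree, one_lt_card]
  exact ⟨v, (mem_neighborFinset ..).mpr hv, w, (mem_neighborFinset ..).mpr hw, hne⟩

namespace HighlyIrregular

variable (hG : G.HighlyIrregular)
include hG

theorem eq_of_degree_eq {v u w : V} (hu : G.Adj v u) (hw : G.Adj v w)
    (h : G.degree u = G.degree w) : u = w :=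
  highlyIrregular_iff_degree.mp hG v u w hu hw h

theorem disjoint_neighborFinset {u v : V} (hne : u ≠ v) (h : G.degree u = G.degree v) :
    Disjoint (G.neighborFinset u) (G.neighborFinset v) := by
  refine Finset.disjoint_left.mpr fun x hu hv ↦ hne ?_
  rw [mem_neighborFinset] at hu hv
  exact hG.eq_of_degree_eq hu.symm hv.symm h

theorem card_image_degree_neighborFinset (v : V) :
    #((G.neighborFinset v).image (G.degree ·)) = G.degree v := by
  rw [card_image_of_injOn, card_neighborFinset_eq_degree]
  intro u hu w hw h
  exact hG.eq_of_degree_eq ((mem_neighborFinset ..).mp hu) ((mem_neighborFinset ..).mp hw) h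

theorem image_degree_neighborFinset {v : V} (hv : G.degree v = G.maxDegree) :
    (G.neighborFinset v).image (G.degree ·) = Icc 1 G.maxDegree := by
  refine eq_of_subset_of_card_le (fun d hd ↦ ?_) ?_
  · obtain ⟨u, hu, rfl⟩ := mem_image.mp hd
    have hpos : 0 < G.degree u :=
      (degree_pos_iff_exists_adj ..).mpr ⟨v, ((mem_neighborFinset ..).mp hu).symm⟩
    exact mem_Icc.mpr ⟨hpos, G.degree_le_maxDegree u⟩
  · rw [hG.card_image_degree_neighborFinset, hv, Nat.card_Icc, Nat.add_sub_cancel]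

theorem sum_degree_neighborFinset {v : V} (hv : G.degree v = G.maxDegree) :
    ∑ u ∈ G.neighborFinset v, G.degree u = ∑ i ∈ Icc 1 G.maxDegree, i := by
  rw [← hG.image_degree_neighborFinset hv, sum_image]
  intro u hu w hw h
  exact hG.eq_of_degree_eq ((mem_neighborFinset ..).mp hu) ((mem_neighborFinset ..).mp hw) h

theorem exists_adj_degree_eq_maxDegree (hΔ : 0 < G.maxDegree) :
    ∃ v u, G.Adj v u ∧ G.degree v = G.maxDegree ∧ G.degree u = G.maxDegree := by
  have : Nonempty V := by
    by_contra h
    rw [not_nonempty_iff] at h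
    simp [maxDegree_of_subsingleton] at hΔ
  obtain ⟨v, hv⟩ := G.exists_maximal_degree_vertex
  have hmem : G.maxDegree ∈ (G.neighborFinset v).image (G.degree ·) := by
    rw [hG.image_degree_neighborFinset hv.symm]
    exact mem_Icc.mpr ⟨hΔ, le_rfl⟩
  obtain ⟨u, hu, hdeg⟩ := mem_image.mp hmem
  exact ⟨v, u, (mem_neighborFinset ..).mp hu, hv.symm, hdeg⟩

theorem degree_mem_Ioo_of_adj_of_not_adj {v u x w : V} (hvu : G.Adj v u)
    (hu : G.degree u = G.maxDegree) (hx : G.Adj v x) (hxw : G.Adj x w) (huw : ¬G.Adj u w) :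
    G.degree x ∈ Ioo 1 G.maxDegree := by
  refine mem_Ioo.mpr ⟨one_lt_degree_of_adj hx.symm hxw fun h ↦ huw (h ▸ hvu.symm),
    (G.degree_le_maxDegree x).lt_of_ne fun h ↦ huw ?_⟩
  rwa [← hG.eq_of_degree_eq hx hvu (h.trans hu.symm)]

theorem degree_mem_Ioo_of_mem_union [DecidableEq V] {v u x w : V} (hvu : G.Adj v u)
    (hv : G.degree v = G.maxDegree) (hu : G.degree u = G.maxDegree)
    (hx : x ∈ G.neighborFinset v ∪ G.neighborFinset u)
    (hw : w ∉ G.neighborFinset v ∪ G.neighborFinset u) (hxw : G.Adj x w) :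
    G.degree x ∈ Ioo 1 G.maxDegree := by
  simp only [mem_union, mem_neighborFinset, not_or] at hx hw
  rcases hx with hx | hx
  · exact hG.degree_mem_Ioo_of_adj_of_not_adj hvu hu hx hxw hw.2
  · exact hG.degree_mem_Ioo_of_adj_of_not_adj hvu.symm hv hx hxw hw.1

theorem card_neighborFinset_union [DecidableEq V] {v u : V} (hvu : G.Adj v u)
    (hv : G.degree v = G.maxDegree) (hu : G.degree u = G.maxDegree) :
    #(G.neighborFinset v ∪ G.neighborFinset u) = 2 * G.maxDegree := by
  rw [card_union_of_disjoint (hG.disjoint_neighborFinset hvu.ne (hv.trans hu.symm)),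
    card_neighborFinset_eq_degree, card_neighborFinset_eq_degree, hv, hu, two_mul]

theorem two_mul_maxDegree_le_card : 2 * G.maxDegree ≤ Fintype.card V := by
  classical
  rcases Nat.eq_zero_or_pos G.maxDegree with h | h
  · simp [h]
  obtain ⟨v, u, hvu, hv, hu⟩ := hG.exists_adj_degree_eq_maxDegree h
  exact hG.card_neighborFinset_union hvu hv hu ▸ card_le_univ _

end HighlyIrregular

theorem Connected.maxDegree_pos [Nontrivial V] (hc : G.Connected) : 0 < G.maxDegree :=
  have ⟨v⟩ := hc.nonempty
  (hc.preconnected.degree_pos_of_nontrivial v).trans_le (G.degree_le_maxDegree v)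

namespace HighlyIrregular

variable [Nontrivial V] (hG : G.HighlyIrregular) (hc : G.Connected)
include hG hc

theorem three_le_maxDegree (h : 2 * G.maxDegree < Fintype.card V) : 3 ≤ G.maxDegree := by
  classical
  obtain ⟨v, u, hvu, hv, hu⟩ := hG.exists_adj_degree_eq_maxDegree hc.maxDegree_pos
  set S := G.neighborFinset v ∪ G.neighborFinset u
  obtain ⟨w, -, hw⟩ := exists_mem_notMem_of_card_lt_card (s := S) (t := univ)
    (by rwa [hG.card_neighborFinset_union hvu hv hu, card_univ])
  have huS : u ∈ S := mem_union_left _ ((mem_neighborFinset ..).mpr hvu)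
  obtain ⟨d, -, hdS, hdw⟩ := (hc.preconnected u w).some.exists_boundary_dart S huS hw
  have := mem_Ioo.mp (hG.degree_mem_Ioo_of_mem_union hvu hv hu hdS hdw d.adj)
  omega

theorem four_le_maxDegree (h : Fintype.card V = 2 * G.maxDegree + 1) : 4 ≤ G.maxDegree := by
  classical
  obtain ⟨v, u, hvu, hv, hu⟩ := hG.exists_adj_degree_eq_maxDegree hc.maxDegree_pos
  set S := G.neighborFinset v ∪ G.neighborFinset u
  obtain ⟨w, hSw⟩ : ∃ w, Sᶜ = {w} := by
    rw [← card_eq_one, card_compl, hG.card_neighborFinset_union hvu hv hu]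
    omega
  have hwS : w ∉ S := by simp [← mem_compl, hSw]
  have hsum : 2 * ∑ i ∈ Icc 1 G.maxDegree, i + G.degree w = 2 * #G.edgeFinset := by
    rw [← sum_degrees_eq_twice_card_edges, ← sum_add_sum_compl S, hSw, sum_singleton,
      sum_union (hG.disjoint_neighborFinset hvu.ne (hv.trans hu.symm)),
      hG.sum_degree_neighborFinset hv, hG.sum_degree_neighborFinset hu, two_mul]
  have hpos : 0 < G.degree w := hc.preconnected.degree_pos_of_nontrivial w
  have hle : G.degree w ≤ #(Ioo 1 G.maxDegree) := by
    rw [← hG.card_image_degree_neighborFinset w]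
    refine card_le_card fun d hd ↦ ?_
    obtain ⟨y, hy, rfl⟩ := mem_image.mp hd
    have hyw := (mem_neighborFinset ..).mp hy
    have hyS : y ∈ S := by
      by_contra hyS
      exact hyw.ne (mem_singleton.mp (hSw ▸ mem_compl.mpr hyS)).symm
    exact hG.degree_mem_Ioo_of_mem_union hvu hv hu hyS hwS hyw.symm
  rw [Nat.card_Ioo] at hle
  omega

end HighlyIrregular

theorem not_highlyIrregular_of_card (hc : G.Connected)
    (hn : Fintype.card V = 3 ∨ Fintype.card V = 5 ∨ Fintype.card V = 7) :
    ¬G.HighlyIrregular := by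
  intro hG
  have : Nontrivial V := Fintype.one_lt_card_iff_nontrivial.mp (by omega)
  have h2 := hG.two_mul_maxDegree_le_card
  have h3 := hG.three_le_maxDegree hc (by omega)
  have h4 := hG.four_le_maxDegree hc (by omega)
  omega

theorem degree_eq_card_of_adj_iff {m : ℕ} {G : SimpleGraph (Fin m)} [DecidableRel G.Adj]
    {x : Fin m} {s : Finset ℕ} (h : ∀ y : Fin m, G.Adj x y ↔ (y : ℕ) ∈ s)
    (hs : ∀ y ∈ s, y < m) : G.degree x = #s := by
  have : (G.neighborFinset x).map Fin.valEmbedding = s := by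
    ext y
    simp only [mem_map, mem_neighborFinset, h, Fin.valEmbedding_apply]
    exact ⟨fun ⟨z, hz, hzy⟩ ↦ hzy ▸ hz, fun hy ↦ ⟨⟨y, hs y hy⟩, hy, rfl⟩⟩
  rw [← this, card_map, card_neighborFinset_eq_degree]

/-- The half graph: with `a_i := i - 1` and `b_j := 2k - j`, `a_i ~ b_j ⇔ i + j > k`. -/
def halfGraph (k : ℕ) : SimpleGraph (Fin (2 * k)) :=
  fromRel fun x y ↦ x < k ∧ k ≤ y ∧ y ≤ x + k

theorem halfGraph_adj {k : ℕ} {x y : Fin (2 * k)} :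
    (halfGraph k).Adj x y ↔ (x < k ∧ k ≤ y ∧ y ≤ x + k) ∨ (y < k ∧ k ≤ x ∧ x ≤ y + k) := by
  rw [halfGraph, fromRel_adj]
  omega

instance (k : ℕ) : DecidableRel (halfGraph k).Adj :=
  inferInstanceAs (DecidableRel (fromRel _).Adj)

theorem halfGraph_degree {k : ℕ} (x : Fin (2 * k)) :
    (halfGraph k).degree x = if (x : ℕ) < k then (x : ℕ) + 1 else 2 * k - x := by
  split_ifs with hx
  · rw [degree_eq_card_of_adj_iff (s := Icc k (x + k))
      (fun y ↦ by rw [halfGraph_adj, mem_Icc]; omega) (fun y hy ↦ by rw [mem_Icc] at hy; omega),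
      Nat.card_Icc]
    omega
  · rw [degree_eq_card_of_adj_iff (s := Ico (x - k) k)
      (fun y ↦ by rw [halfGraph_adj, mem_Ico]; omega) (fun y hy ↦ by rw [mem_Ico] at hy; omega),
      Nat.card_Ico]
    omega

theorem halfGraph_highlyIrregular (k : ℕ) : (halfGraph k).HighlyIrregular := by
  rw [highlyIrregular_iff_degree]
  intro v u w hu hw h
  rw [halfGraph_degree, halfGraph_degree] at h
  rw [halfGraph_adj] at hu hw
  split_ifs at h <;> omega

theorem halfGraph_connected {k : ℕ} (hk : 0 < k) : (halfGraph k).Connected := by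
  let c : Fin (2 * k) := ⟨k - 1, by omega⟩
  have adj {x y : Fin (2 * k)} (h : x < k ∧ k ≤ y ∧ y ≤ x + k) : (halfGraph k).Adj x y :=
    halfGraph_adj.mpr (.inl h)
  refine connected_iff_exists_forall_reachable _ |>.mpr ⟨c, fun z ↦ ?_⟩
  by_cases hz : (z : ℕ) < k
  · exact (adj (x := c) (y := ⟨k, by omega⟩) (by dsimp only [c]; omega)).reachable.trans
      (adj (y := ⟨k, by omega⟩) (by dsimp only; omega)).symm.reachable
  · exact (adj (x := c) (by dsimp only [c]; omega)).reachable

/-- The half graph with its edge between `k - 1` and `2k - 2` (of degrees `k` and `2`)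
subdivided by the new vertex `2k`. -/
def subdividedHalfGraph (k : ℕ) : SimpleGraph (Fin (2 * k + 1)) :=
  fromRel fun x y ↦ (x < k ∧ k ≤ y ∧ y ≤ x + k ∧ ¬(x = k - 1 ∧ y = 2 * k - 2)) ∨
    (x = 2 * k ∧ (y = k - 1 ∨ y = 2 * k - 2))

instance (k : ℕ) : DecidableRel (subdividedHalfGraph k).Adj :=
  inferInstanceAs (DecidableRel (fromRel _).Adj)

theorem subdividedHalfGraph_degree {k : ℕ} (hk : 2 ≤ k) (x : Fin (2 * k + 1)) :
    (subdividedHalfGraph k).degree x =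
      if (x : ℕ) < k then (x : ℕ) + 1 else if (x : ℕ) < 2 * k then 2 * k - x else 2 := by
  have deg_eq {s : Finset ℕ} (hs : ∀ y : ℕ, y ∈ s → y < 2 * k + 1)
      (h : ∀ y : Fin (2 * k + 1), (subdividedHalfGraph k).Adj x y ↔ (y : ℕ) ∈ s) :
      (subdividedHalfGraph k).degree x = #s :=
    degree_eq_card_of_adj_iff h hs
  by_cases h1 : (x : ℕ) = k - 1
  · rw [deg_eq (s := insert (2 * k) ((Ico k (2 * k)).erase (2 * k - 2)))
      (fun y hy ↦ by rw [mem_insert, mem_erase, mem_Ico] at hy; omega)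
      (fun y ↦ by rw [subdividedHalfGraph, fromRel_adj, mem_insert, mem_erase, mem_Ico]; omega),
      card_insert_of_notMem (by simp), card_erase_of_mem (by rw [mem_Ico]; omega), Nat.card_Ico]
    split_ifs <;> omega
  by_cases h2 : (x : ℕ) = 2 * k - 2
  · rw [deg_eq (s := {k - 2, 2 * k}) (fun y hy ↦ by rw [mem_insert, mem_singleton] at hy; omega)
      (fun y ↦ by rw [subdividedHalfGraph, fromRel_adj, mem_insert, mem_singleton]; omega),
      card_pair (by omega)]
    split_ifs <;> omega
  by_cases h3 : (x : ℕ) = 2 * k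
  · rw [deg_eq (s := {k - 1, 2 * k - 2}) (fun y hy ↦ by rw [mem_insert, mem_singleton] at hy; omega)
      (fun y ↦ by rw [subdividedHalfGraph, fromRel_adj, mem_insert, mem_singleton]; omega),
      card_pair (by omega)]
    split_ifs <;> omega
  split_ifs with hx
  · rw [deg_eq (s := Icc k (x + k)) (fun y hy ↦ by rw [mem_Icc] at hy; omega)
      (fun y ↦ by rw [subdividedHalfGraph, fromRel_adj, mem_Icc]; omega), Nat.card_Icc]
    omega
  · rw [deg_eq (s := Ico (x - k) k) (fun y hy ↦ by rw [mem_Ico] at hy; omega)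
      (fun y ↦ by rw [subdividedHalfGraph, fromRel_adj, mem_Ico]; omega), Nat.card_Ico]
    omega
  · omega

theorem subdividedHalfGraph_highlyIrregular {k : ℕ} (hk : 4 ≤ k) :
    (subdividedHalfGraph k).HighlyIrregular := by
  rw [highlyIrregular_iff_degree]
  intro v u w hu hw h
  rw [subdividedHalfGraph_degree (by omega), subdividedHalfGraph_degree (by omega)] at h
  rw [subdividedHalfGraph, fromRel_adj] at hu hw
  split_ifs at h <;> omega

theorem subdividedHalfGraph_connected {k : ℕ} (hk : 3 ≤ k) :
    (subdividedHalfGraph k).Connected := by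
  let c : Fin (2 * k + 1) := ⟨k - 1, by omega⟩
  have adj {x y : Fin (2 * k + 1)} (h : (x < k ∧ k ≤ y ∧ y ≤ x + k ∧ y ≠ 2 * k - 2) ∨
      (y = 2 * k ∧ (x = k - 1 ∨ x = 2 * k - 2))) : (subdividedHalfGraph k).Adj x y :=
    (fromRel_adj ..).mpr ⟨by omega, by omega⟩
  refine connected_iff_exists_forall_reachable _ |>.mpr ⟨c, fun z ↦ ?_⟩
  by_cases hz : (z : ℕ) < k
  · exact (adj (x := c) (y := ⟨k, by omega⟩) (by dsimp only [c]; omega)).reachable.trans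
      (adj (y := ⟨k, by omega⟩) (by dsimp only; omega)).symm.reachable
  by_cases hz' : (z : ℕ) = 2 * k - 2
  · exact (adj (x := c) (y := ⟨2 * k, by omega⟩) (by dsimp only [c]; omega)).reachable.trans
      (adj (y := ⟨2 * k, by omega⟩) (by dsimp only; omega)).symm.reachable
  · exact (adj (x := c) (by dsimp only [c]; omega)).reachable

end SimpleGraph

open SimpleGraph

/-- For every `n ≥ 1`, there exists a connected highly irregular simple graph on
`n` vertices if and only if `n ∉ {3, 5, 7}`. -/
theorem exists_highly_irregular_iff :
    ∀ n : ℕ, 1 ≤ n →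
      ((∃ G : SimpleGraph (Fin n), G.Connected ∧ G.HighlyIrregular) ↔
        n ∉ ({3, 5, 7} : Set ℕ)) := by
  intro n hn
  simp only [Set.mem_insert_iff, Set.mem_singleton_iff, not_or]
  constructor
  · rintro ⟨G, hc, hG⟩
    classical
    refine ⟨?_, ?_, ?_⟩ <;> rintro rfl <;> exact not_highlyIrregular_of_card hc (by simp) hG
  · rintro ⟨h3, h5, h7⟩
    obtain ⟨k, rfl | rfl⟩ := Nat.even_or_odd' n
    · exact ⟨halfGraph k, halfGraph_connected (by omega), halfGraph_highlyIrregular k⟩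
    rcases Nat.eq_zero_or_pos k with rfl | hk
    · exact ⟨⊥, connected_bot_iff.mpr ⟨inferInstanceAs (Subsingleton (Fin 1)), inferInstance⟩,
        fun _ _ _ h ↦ h.elim⟩
    · exact ⟨subdividedHalfGraph k, subdividedHalfGraph_connected (by omega),
        subdividedHalfGraph_highlyIrregular (by omega)⟩
end

section
/- Let n ≥ 3 and let r be a tournament on n vertices such that every vertex has out-degree (n−1)/2 (in particular n is odd), and suppose there is a natural number λ such that every pair of distinct vertices has exactly λ common out-neighbours (vertices w with r u w and r v w). Then n is congruent to 3 modulo 4 and 4λ = n − 3. -/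
/-!
Double counting arcs shows that a tournament in which every out-degree is `k` also has every
in-degree equal to `k`, so `n = 2k + 1`. Fixing a vertex `u` and double counting the pairs
`(v, w)` with `v ≠ u` and `u → w ← v` gives `(n - 1) λ = k (k - 1)`, i.e. `2λ = k - 1`.
-/

open Finset

variable {V : Type*} [Fintype V] {r : V → V → Prop} [DecidableRel r]

lemma card_in_add_card_out_of_tournament (hirr : ∀ a, ¬ r a a)
    (htour : ∀ a b : V, a ≠ b → Xor (r a b) (r b a)) (w : V) :
    #{u | r u w} + #{u | r w u} = Fintype.card V - 1 := by
  classical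
  have hunion : ({u | r u w} : Finset V) ∪ ({u | r w u} : Finset V) = univ.erase w := by
    ext u
    simp only [mem_union, mem_filter, mem_univ, true_and, mem_erase, and_true]
    constructor
    · rintro (h | h) rfl <;> exact hirr u h
    · intro hu
      rcases htour u w hu with ⟨h, -⟩ | ⟨h, -⟩
      exacts [Or.inl h, Or.inr h]
  have hdisj : Disjoint ({u | r u w} : Finset V) ({u | r w u} : Finset V) := by
    refine disjoint_filter.2 fun u _ huw hwu => ?_
    have hne : u ≠ w := by rintro rfl; exact hirr u huw
    rcases htour u w hne with ⟨-, h⟩ | ⟨-, h⟩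
    exacts [h hwu, h huw]
  rw [← card_union_of_disjoint hdisj, hunion, card_erase_of_mem (mem_univ w), card_univ]

lemma two_mul_eq_card_sub_one_of_regular [Nonempty V] (hirr : ∀ a, ¬ r a a)
    (htour : ∀ a b : V, a ≠ b → Xor (r a b) (r b a)) {k : ℕ}
    (hout : ∀ u, #{w | r u w} = k) :
    2 * k = Fintype.card V - 1 := by
  have hin : ∀ w, #{u | r u w} = Fintype.card V - 1 - k := fun w => by
    have := card_in_add_card_out_of_tournament hirr htour w
    rw [hout] at this
    omega
  have harcs : Fintype.card V * k = Fintype.card V * (Fintype.card V - 1 - k) := by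
    simpa using card_mul_eq_card_mul (s := univ) (t := univ) r
      (fun u _ => hout u) (fun w _ => hin w)
  have := Nat.eq_of_mul_eq_mul_left Fintype.card_pos harcs
  omega

lemma card_in_eq_of_regular (hirr : ∀ a, ¬ r a a)
    (htour : ∀ a b : V, a ≠ b → Xor (r a b) (r b a)) {k : ℕ}
    (hout : ∀ u, #{w | r u w} = k) (w : V) :
    #{u | r u w} = k := by
  have : Nonempty V := ⟨w⟩
  have := two_mul_eq_card_sub_one_of_regular hirr htour hout
  have := card_in_add_card_out_of_tournament hirr htour w
  rw [hout] at this
  omega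

lemma card_sub_one_mul_eq_of_card_common_out {k lam : ℕ} (u : V)
    (hout : #{w | r u w} = k) (hin : ∀ w, #{v | r v w} = k)
    (hcommon : ∀ v, v ≠ u → #{w | r u w ∧ r v w} = lam) :
    (Fintype.card V - 1) * lam = k * (k - 1) := by
  classical
  have habove : ∀ v ∈ univ.erase u, #(bipartiteAbove r {w | r u w} v) = lam := by
    intro v hv
    rw [bipartiteAbove, filter_filter, ← hcommon v (ne_of_mem_erase hv)]
  have hbelow :
      ∀ w ∈ ({w | r u w} : Finset V), #(bipartiteBelow r (univ.erase u) w) = k - 1 := by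
    intro w hw
    rw [bipartiteBelow, filter_erase, card_erase_of_mem (by simpa using hw), hin w]
  simpa [hout] using card_mul_eq_card_mul r habove hbelow

/-- A doubly regular tournament has order `n ≡ 3 (mod 4)`, with each pair of
vertices having exactly `(n − 3)/4` common out-neighbours. -/
theorem doubly_regular_tournament (n : ℕ) (hn : 3 ≤ n)
    (r : Fin n → Fin n → Prop)
    (hirr : ∀ a, ¬ r a a)
    (htour : ∀ a b : Fin n, a ≠ b → Xor' (r a b) (r b a))
    (hreg : ∀ u : Fin n, Nat.card {w : Fin n // r u w} = (n - 1) / 2)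
    (lam : ℕ)
    (hdreg : ∀ u v : Fin n, u ≠ v →
      Nat.card {w : Fin n // r u w ∧ r v w} = lam) :
    n % 4 = 3 ∧ 4 * lam = n - 3 := by
  classical
  set k := (n - 1) / 2
  have hout : ∀ u, #{w | r u w} = k := fun u => by
    rw [← hreg u, Nat.card_eq_fintype_card, Fintype.card_subtype]
  have hcommon : ∀ u v, u ≠ v → #{w | r u w ∧ r v w} = lam := fun u v huv => by
    rw [← hdreg u v huv, Nat.card_eq_fintype_card, Fintype.card_subtype]
  have : Nonempty (Fin n) := ⟨⟨0, by omega⟩⟩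
  have h2k : 2 * k = n - 1 := by
    simpa using two_mul_eq_card_sub_one_of_regular hirr htour hout
  have hpairs : (n - 1) * lam = k * (k - 1) := by
    simpa using card_sub_one_mul_eq_of_card_common_out ⟨0, by omega⟩ (hout _)
      (card_in_eq_of_regular hirr htour hout) fun v hv => hcommon _ _ hv.symm
  have hlam : 2 * lam = k - 1 := by
    refine Nat.eq_of_mul_eq_mul_left (show 0 < k by omega) ?_
    rw [← hpairs, ← h2k, mul_left_comm, mul_assoc]
  omega
end
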